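/- arXiv:0810.2725 — 7 statements merged into one kernel-verified Lean document; each statement's English description precedes it below -/
import Mathlib

section
/- Let K be a field of characteristic p > 0, let θ : K → K be a Tits endomorphism, and let ν be a nontrivial θ-invariant valuation of K. Then the value group ν(K \ {0}) is a dense additive subgroup of ℝ; in particular ν is not a discrete valuation (its value group is not cyclic). -/
/-!
Since `θ` is injective and rescales valuations by `√p`, the value group is stable under
multiplication by `√p`, which is irrational because `p` is prime. A cyclic subgroup `ℤ a ≠ 0`
of `ℝ` cannot be stable under an irrational scaling, and a non-cyclic subgroup of `ℝ` is dense.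
-/

/-- Multiplication of an extended real (in `WithTop ℝ`) by a real scalar,
with the convention `c · ∞ = ∞`. -/
noncomputable def smulTop (c : ℝ) (x : WithTop ℝ) : WithTop ℝ :=
  WithTop.map (fun y => c * y) x

theorem smulTop_coe (c r : ℝ) : smulTop c r = ((c * r : ℝ) : WithTop ℝ) := rfl

namespace AddSubgroup

theorem not_exists_eq_zmultiples_of_irrational_mul_mem {G : AddSubgroup ℝ} (hG : G ≠ ⊥)
    {c : ℝ} (hc : Irrational c) (hmem : ∀ r ∈ G, c * r ∈ G) :
    ¬ ∃ a : ℝ, (G : Set ℝ) = zmultiples a := by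
  rintro ⟨a, ha⟩
  replace ha : G = zmultiples a := SetLike.coe_injective ha
  subst ha
  have ha0 : a ≠ 0 := by
    rintro rfl
    exact hG zmultiples_zero_eq_bot
  obtain ⟨n, hn⟩ := mem_zmultiples_iff.mp (hmem a (mem_zmultiples a))
  rw [zsmul_eq_mul] at hn
  exact hc.ne_int n (mul_right_cancel₀ ha0 hn).symm

theorem dense_of_irrational_mul_mem {G : AddSubgroup ℝ} (hG : G ≠ ⊥)
    {c : ℝ} (hc : Irrational c) (hmem : ∀ r ∈ G, c * r ∈ G) : Dense (G : Set ℝ) := by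
  refine G.dense_or_cyclic.resolve_right ?_
  rintro ⟨a, rfl⟩
  refine not_exists_eq_zmultiples_of_irrational_mul_mem hG hc hmem ⟨a, ?_⟩
  rw [zmultiples_eq_closure]

end AddSubgroup

section ValueGroup

variable {K : Type*} [GroupWithZero K] {ν : K → WithTop ℝ}
  (hν0 : ∀ x : K, ν x = ⊤ ↔ x = 0) (hmul : ∀ x y : K, ν (x * y) = ν x + ν y)

include hν0 in
theorem exists_coe_eq_of_ne_zero {x : K} (hx : x ≠ 0) : ∃ r : ℝ, ν x = r := by
  obtain ⟨r, hr⟩ := WithTop.ne_top_iff_exists.mp (mt (hν0 x).mp hx)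
  exact ⟨r, hr.symm⟩

include hν0 hmul in
theorem val_one : ν 1 = (0 : ℝ) := by
  obtain ⟨r, hr⟩ := exists_coe_eq_of_ne_zero hν0 (one_ne_zero : (1 : K) ≠ 0)
  have h := hmul 1 1
  rw [one_mul, hr] at h
  have : r = r + r := by exact_mod_cast h
  rw [hr, show r = 0 by linarith]

include hν0 hmul in
theorem val_inv {x : K} (hx : x ≠ 0) {r : ℝ} (hr : ν x = r) : ν x⁻¹ = (-r : ℝ) := by
  obtain ⟨s, hs⟩ := exists_coe_eq_of_ne_zero hν0 (inv_ne_zero hx)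
  have h := hmul x x⁻¹
  rw [mul_inv_cancel₀ hx, val_one hν0 hmul, hr, hs] at h
  have : 0 = r + s := by exact_mod_cast h
  rw [hs, show s = -r by linarith]

def valueGroup : AddSubgroup ℝ where
  carrier := {r : ℝ | ∃ x : K, x ≠ 0 ∧ ν x = (r : WithTop ℝ)}
  zero_mem' := ⟨1, one_ne_zero, val_one hν0 hmul⟩
  add_mem' := by
    rintro r s ⟨x, hx, hxr⟩ ⟨y, hy, hys⟩
    exact ⟨x * y, mul_ne_zero hx hy, by rw [hmul, hxr, hys, WithTop.coe_add]⟩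
  neg_mem' := by
    rintro r ⟨x, hx, hxr⟩
    exact ⟨x⁻¹, inv_ne_zero hx, val_inv hν0 hmul hx hxr⟩

theorem valueGroup_ne_bot (hnt : ∃ x : K, x ≠ 0 ∧ ν x ≠ 0) : valueGroup hν0 hmul ≠ ⊥ := by
  obtain ⟨x, hx, hνx⟩ := hnt
  obtain ⟨r, hr⟩ := exists_coe_eq_of_ne_zero hν0 hx
  refine AddSubgroup.ne_bot_iff_exists_ne_zero.mpr ⟨⟨r, x, hx, hr⟩, ?_⟩
  rintro ⟨⟩
  exact hνx (by rw [hr, WithTop.coe_zero])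

end ValueGroup

theorem mul_mem_valueGroup_of_map {K : Type*} [DivisionRing K] {ν : K → WithTop ℝ}
    (hν0 : ∀ x : K, ν x = ⊤ ↔ x = 0) (hmul : ∀ x y : K, ν (x * y) = ν x + ν y)
    {c : ℝ} (θ : K →+* K) (hinv : ∀ x : K, x ≠ 0 → ν (θ x) = smulTop c (ν x))
    {r : ℝ} (hr : r ∈ valueGroup hν0 hmul) : c * r ∈ valueGroup hν0 hmul := by
  obtain ⟨x, hx, hxr⟩ := hr
  exact ⟨θ x, (map_ne_zero θ).mpr hx, by rw [hinv x hx, hxr, smulTop_coe]⟩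

theorem stmt_1_general {K : Type*} [Field K] (p : ℕ) (hp : 0 < p) [CharP K p]
    (θ : K →+* K)
    (ν : K → WithTop ℝ)
    (hν0 : ∀ x : K, ν x = ⊤ ↔ x = 0)
    (hmul : ∀ x y : K, ν (x * y) = ν x + ν y)
    (hnt : ∃ x : K, x ≠ 0 ∧ ν x ≠ 0)
    (hinv : ∀ x : K, x ≠ 0 → ν (θ x) = smulTop (Real.sqrt p) (ν x)) :
    (∃ G : AddSubgroup ℝ,
        (G : Set ℝ) = {r : ℝ | ∃ x : K, x ≠ 0 ∧ ν x = (r : WithTop ℝ)}) ∧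
    Dense {r : ℝ | ∃ x : K, x ≠ 0 ∧ ν x = (r : WithTop ℝ)} ∧
    ¬ ∃ a : ℝ, {r : ℝ | ∃ x : K, x ≠ 0 ∧ ν x = (r : WithTop ℝ)}
        = (AddSubgroup.zmultiples a : Set ℝ) := by
  have hprime : p.Prime := (CharP.char_is_prime_or_zero K p).resolve_right hp.ne'
  have hG := valueGroup_ne_bot hν0 hmul hnt
  have hmem : ∀ r ∈ valueGroup hν0 hmul, Real.sqrt p * r ∈ valueGroup hν0 hmul :=
    fun _ => mul_mem_valueGroup_of_map hν0 hmul θ hinv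
  exact ⟨⟨valueGroup hν0 hmul, rfl⟩,
    AddSubgroup.dense_of_irrational_mul_mem hG hprime.irrational_sqrt hmem,
    AddSubgroup.not_exists_eq_zmultiples_of_irrational_mul_mem hG hprime.irrational_sqrt hmem⟩

/-- If `K` is a field of characteristic `p > 0`, `θ` a Tits endomorphism of `K`,
and `ν` a nontrivial `θ`-invariant valuation of `K`, then the value group
`ν(K \ {0})` is a dense additive subgroup of `ℝ`; in particular it is not cyclic
(so `ν` is not discrete). -/
theorem stmt_1 {K : Type*} [Field K] (p : ℕ) (hp : 0 < p) [CharP K p]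
    (θ : K →+* K) (hθ : ∀ x : K, θ (θ x) = x ^ p)
    (ν : K → WithTop ℝ)
    (hν0 : ∀ x : K, ν x = ⊤ ↔ x = 0)
    (hmul : ∀ x y : K, ν (x * y) = ν x + ν y)
    (hadd : ∀ x y : K, min (ν x) (ν y) ≤ ν (x + y))
    (hnt : ∃ x : K, x ≠ 0 ∧ ν x ≠ 0)
    (hinv : ∀ x : K, x ≠ 0 → ν (θ x) = smulTop (Real.sqrt p) (ν x)) :
    (∃ G : AddSubgroup ℝ,
        (G : Set ℝ) = {r : ℝ | ∃ x : K, x ≠ 0 ∧ ν x = (r : WithTop ℝ)}) ∧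
    Dense {r : ℝ | ∃ x : K, x ≠ 0 ∧ ν x = (r : WithTop ℝ)} ∧
    ¬ ∃ a : ℝ, {r : ℝ | ∃ x : K, x ≠ 0 ∧ ν x = (r : WithTop ℝ)}
        = (AddSubgroup.zmultiples a : Set ℝ) :=
  stmt_1_general p hp θ ν hν0 hmul hnt hinv
end

section
/- Let K be a field of characteristic 3 with a Tits endomorphism θ. Then the set T = K × K × K with the operation (r,s,t)·(w,u,v) = (r+w, s+u+θ(r)w, t+v−ru+sw−r^{θ+1}w) is a group with identity (0,0,0), and the inverse of (r,s,t) is (−r, −s+r^{θ+1}, −t). -/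
/-- The multiplication
`(r,s,t)·(w,u,v) = (r+w, s+u+θ(r)w, t+v−ru+sw−r^{θ+1}w)` on `T = K × K × K`. -/
def Tmul {K : Type*} [Field K] (θ : K →+* K) (a b : K × K × K) : K × K × K :=
  (a.1 + b.1, a.2.1 + b.2.1 + θ a.1 * b.1,
    a.2.2 + b.2.2 - a.1 * b.2.1 + a.2.1 * b.1 - θ a.1 * a.1 * b.1)

section Tmul

variable {K : Type*} [Field K] (θ : K →+* K)

-- Only the additivity of `θ` enters: `θ(r + r')` splits the cross terms of either bracketing.
theorem Tmul_assoc (a b c : K × K × K) :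
    Tmul θ (Tmul θ a b) c = Tmul θ a (Tmul θ b c) := by
  simp only [Tmul, map_add, Prod.mk.injEq]
  exact ⟨by ring, by ring, by ring⟩

theorem zero_Tmul (a : K × K × K) : Tmul θ (0, 0, 0) a = a := by
  simp [Tmul]

theorem Tmul_zero (a : K × K × K) : Tmul θ a (0, 0, 0) = a := by
  simp [Tmul]

theorem Tmul_inv_cancel (r s t : K) :
    Tmul θ (r, s, t) (-r, -s + θ r * r, -t) = (0, 0, 0) := by
  simp only [Tmul, Prod.mk.injEq]
  exact ⟨by ring, by ring, by ring⟩

theorem inv_Tmul_cancel (r s t : K) :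
    Tmul θ (-r, -s + θ r * r, -t) (r, s, t) = (0, 0, 0) := by
  simp only [Tmul, map_neg, Prod.mk.injEq]
  exact ⟨by ring, by ring, by ring⟩

end Tmul

theorem stmt_4_general {K : Type*} [Field K]
    (θ : K →+* K) :
    (∀ a b c : K × K × K, Tmul θ (Tmul θ a b) c = Tmul θ a (Tmul θ b c)) ∧
    (∀ a : K × K × K, Tmul θ ((0, 0, 0) : K × K × K) a = a) ∧
    (∀ a : K × K × K, Tmul θ a ((0, 0, 0) : K × K × K) = a) ∧
    (∀ r s t : K,
      Tmul θ (r, s, t) (-r, -s + θ r * r, -t) = ((0, 0, 0) : K × K × K)) ∧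
    (∀ r s t : K,
      Tmul θ (-r, -s + θ r * r, -t) (r, s, t) = ((0, 0, 0) : K × K × K)) :=
  ⟨Tmul_assoc θ, zero_Tmul θ, Tmul_zero θ, Tmul_inv_cancel θ, inv_Tmul_cancel θ⟩

/-- Let `K` be a field of characteristic 3 with a Tits endomorphism `θ`.
Then `T = K × K × K` with the operation
`(r,s,t)·(w,u,v) = (r+w, s+u+θ(r)w, t+v−ru+sw−r^{θ+1}w)` is a group with identity
`(0,0,0)`, and the inverse of `(r,s,t)` is `(−r, −s+r^{θ+1}, −t)`. -/
theorem stmt_4 {K : Type*} [Field K] [CharP K 3]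
    (θ : K →+* K) (hθ : ∀ x : K, θ (θ x) = x ^ 3) :
    (∀ a b c : K × K × K, Tmul θ (Tmul θ a b) c = Tmul θ a (Tmul θ b c)) ∧
    (∀ a : K × K × K, Tmul θ ((0, 0, 0) : K × K × K) a = a) ∧
    (∀ a : K × K × K, Tmul θ a ((0, 0, 0) : K × K × K) = a) ∧
    (∀ r s t : K,
      Tmul θ (r, s, t) (-r, -s + θ r * r, -t) = ((0, 0, 0) : K × K × K)) ∧
    (∀ r s t : K,
      Tmul θ (-r, -s + θ r * r, -t) (r, s, t) = ((0, 0, 0) : K × K × K)) :=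
  stmt_4_general θ
end

section
/- Let K be a field of characteristic 3 with a Tits endomorphism θ. The center of the group T = K × K × K with operation (r,s,t)·(w,u,v) = (r+w, s+u+θ(r)w, t+v−ru+sw−r^{θ+1}w) is exactly the set {(0,0,t) : t ∈ K}, and this center is isomorphic to the additive group of K. -/
/-! Commuting `(r,s,t)` with `(0,1,0)` forces `2r = 0`, and then commuting with `(1,0,0)`
forces `2s = 0`; as `2 ≠ 0` in characteristic 3, the center is `{(0,0,t)}`. These elements
multiply by adding their last coordinates. -/

section

variable {K : Type*} [Field K] (θ : K →+* K)

lemma Tmul_zero_zero_left (t : K) (b : K × K × K) :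
    Tmul θ (0, 0, t) b = (b.1, b.2.1, t + b.2.2) := by
  simp [Tmul]

lemma Tmul_zero_zero_right (t : K) (b : K × K × K) :
    Tmul θ b (0, 0, t) = (b.1, b.2.1, t + b.2.2) := by
  simp [Tmul, add_comm]

lemma Tmul_zero_zero (x y : K) : Tmul θ (0, 0, x) (0, 0, y) = (0, 0, x + y) :=
  Tmul_zero_zero_left θ x _

lemma fst_eq_zero_of_comm (h2 : (2 : K) ≠ 0) {a : K × K × K}
    (ha : Tmul θ a (0, 1, 0) = Tmul θ (0, 1, 0) a) : a.1 = 0 := by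
  have h := congrArg (fun x => x.2.2) ha
  simp only [Tmul, map_zero, mul_zero, mul_one, one_mul, zero_mul, add_zero, zero_add,
    sub_zero] at h
  exact (mul_eq_zero.mp (by linear_combination -h : (2 : K) * a.1 = 0)).resolve_left h2

lemma snd_eq_zero_of_comm (h2 : (2 : K) ≠ 0) {a : K × K × K} (ha₁ : a.1 = 0)
    (ha : Tmul θ a (1, 0, 0) = Tmul θ (1, 0, 0) a) : a.2.1 = 0 := by
  have h := congrArg (fun x => x.2.2) ha
  simp only [Tmul, ha₁, map_zero, map_one, mul_zero, mul_one, one_mul, add_zero,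
    zero_add, sub_zero] at h
  exact (mul_eq_zero.mp (by linear_combination h : (2 : K) * a.2.1 = 0)).resolve_left h2

lemma center_eq (h2 : (2 : K) ≠ 0) :
    {a : K × K × K | ∀ b : K × K × K, Tmul θ a b = Tmul θ b a}
      = {a : K × K × K | ∃ t : K, a = (0, 0, t)} := by
  ext a
  constructor
  · intro ha
    have hr := fst_eq_zero_of_comm θ h2 (ha _)
    have hs := snd_eq_zero_of_comm θ h2 hr (ha _)
    exact ⟨a.2.2, Prod.ext hr (Prod.ext hs rfl)⟩
  · rintro ⟨t, rfl⟩ b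
    rw [Tmul_zero_zero_left, Tmul_zero_zero_right]

end

theorem stmt_5_general {K : Type*} [Field K] [CharP K 3]
    (θ : K →+* K) :
    {a : K × K × K | ∀ b : K × K × K, Tmul θ a b = Tmul θ b a}
      = {a : K × K × K | ∃ t : K, a = (0, 0, t)} ∧
    ∃ f : K → K × K × K, Function.Injective f ∧
      Set.range f = {a : K × K × K | ∀ b : K × K × K, Tmul θ a b = Tmul θ b a} ∧
      ∀ x y : K, Tmul θ (f x) (f y) = f (x + y) := by
  have hcenter := center_eq θ (Ring.two_ne_zero (by rw [ringChar.eq K 3]; norm_num))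
  refine ⟨hcenter, fun t => (0, 0, t), fun x y h => congrArg (fun a => a.2.2) h, ?_,
    Tmul_zero_zero θ⟩
  rw [hcenter]
  ext a
  simp [eq_comm]

/-- Let `K` be a field of characteristic 3 with a Tits endomorphism `θ`.
The center of the group `T = K × K × K` is exactly `{(0,0,t) : t ∈ K}`, and this
center is isomorphic to the additive group of `K`. -/
theorem stmt_5 {K : Type*} [Field K] [CharP K 3]
    (θ : K →+* K) (hθ : ∀ x : K, θ (θ x) = x ^ 3) :
    {a : K × K × K | ∀ b : K × K × K, Tmul θ a b = Tmul θ b a}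
      = {a : K × K × K | ∃ t : K, a = (0, 0, t)} ∧
    ∃ f : K → K × K × K, Function.Injective f ∧
      Set.range f = {a : K × K × K | ∀ b : K × K × K, Tmul θ a b = Tmul θ b a} ∧
      ∀ x y : K, Tmul θ (f x) (f y) = f (x + y) :=
  stmt_5_general θ
end

section
/- Let K be a field of characteristic 2 with a Tits endomorphism θ. The norm R(s,t) = s^{θ+2} + st + θ(t) is anisotropic: if R(s,t) = 0 for s, t ∈ K, then s = 0 and t = 0. -/
/-!
In characteristic 2, `R(s,t) = 0` reads `θ t = s^{θ+2} + st`. Applying `θ` and using `θ² = (·)²`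
gives `t² = s^{θ+1} t`, so `t = 0` or `t = s^{θ+1}`. For both values `R(s,t) = s^{θ+2}`,
which vanishes only for `s = 0`, and then `t = 0` as well.
-/

/-- The norm `R(s,t) = s^{θ+2} + st + θ(t)` of the group `S = K × K`. -/
def Rnorm {K : Type*} [Field K] (θ : K →+* K) (s t : K) : K :=
  θ s * s ^ 2 + s * t + θ t

section

variable {K : Type*} [Field K] [CharP K 2] (θ : K →+* K)

theorem map_eq_of_Rnorm_eq_zero {s t : K} (h : Rnorm θ s t = 0) :
    θ t = θ s * s ^ 2 + s * t := by
  rw [Rnorm, CharTwo.add_eq_zero] at h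
  exact h.symm

theorem eq_zero_or_eq_of_Rnorm_eq_zero (hθ : ∀ x : K, θ (θ x) = x ^ 2) {s t : K}
    (h : Rnorm θ s t = 0) : t = 0 ∨ t = θ s * s := by
  have hθt := map_eq_of_Rnorm_eq_zero θ h
  have hsq := congrArg θ hθt
  rw [hθ, map_add, map_mul, map_mul, map_pow, hθ, hθt] at hsq
  have : t * (t - θ s * s) = 0 := by
    linear_combination hsq + s ^ 2 * θ s ^ 2 * CharTwo.two_eq_zero (R := K)
  exact (mul_eq_zero.1 this).imp_right sub_eq_zero.1

theorem Rnorm_map_mul_self_right (hθ : ∀ x : K, θ (θ x) = x ^ 2) (s : K) :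
    Rnorm θ s (θ s * s) = θ s * s ^ 2 := by
  rw [Rnorm, map_mul, hθ]
  linear_combination θ s * s ^ 2 * CharTwo.two_eq_zero (R := K)

end

/-- Let `K` be a field of characteristic 2 with a Tits endomorphism `θ`.
The norm `R(s,t) = s^{θ+2} + st + θ(t)` is anisotropic: if `R(s,t) = 0`
then `s = 0` and `t = 0`. -/
theorem stmt_6 {K : Type*} [Field K] [CharP K 2]
    (θ : K →+* K) (hθ : ∀ x : K, θ (θ x) = x ^ 2)
    (s t : K) (h : Rnorm θ s t = 0) :
    s = 0 ∧ t = 0 := by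
  have ht := eq_zero_or_eq_of_Rnorm_eq_zero θ hθ h
  have hs : θ s * s ^ 2 = 0 := by
    rcases ht with rfl | rfl
    · simpa [Rnorm] using h
    · rwa [← Rnorm_map_mul_self_right θ hθ]
  obtain rfl : s = 0 := by simpa using hs
  simpa using ht
end

section
/- Let K be a field of characteristic 3 with a Tits endomorphism θ. The norm N(r,s,t) = r^{θ+1}θ(s) − rθ(t) − r^{θ+3}s − r²s² + s^{θ+1} + t² − r^{2θ+4} is anisotropic: if N(r,s,t) = 0 for r, s, t ∈ K, then r = s = t = 0. -/
/-!
The substitution `s = r^{θ+1} s'`, `t = r^{θ+2} t'` multiplies `N` by `(r^{θ+2})²`, so for `r ≠ 0`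
it suffices to treat `r = 1`. Writing `s' = a - 1`, the equation `N(1, s', t) = 0` reads
`a^{θ+1} - a² + t² - t^θ = 1`. Eliminating `t^θ` between it and its `θ`-image leaves a product of
two factors exchanged by `a ↦ -a`; one factor with its `θ`-image forces
`(a³ + a^θ)(a + a^θ)³ = 0`, hence `a^θ = -a`, so `a ∈ 𝔽₃` and `a = 0`, after which no `t` fits.
For `r = 0` the norm is `s^{θ+1} + t²`, whose `θ`-image gives `(t^θ)² = (st)²`, hence `t³ = -t³`.
-/

/-- The norm
`N(r,s,t) = r^{θ+1}θ(s) − rθ(t) − r^{θ+3}s − r²s² + s^{θ+1} + t² − r^{2θ+4}`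
of the group `T = K × K × K`. -/
def Nnorm {K : Type*} [Field K] (θ : K →+* K) (r s t : K) : K :=
  θ r * r * θ s - r * θ t - θ r * r ^ 3 * s - r ^ 2 * s ^ 2
    + θ s * s + t ^ 2 - θ r ^ 2 * r ^ 4

section TitsEndomorphism

variable {K : Type*} [Field K] {θ : K →+* K}

theorem Nnorm_zero_left (s t : K) : Nnorm θ 0 s t = θ s * s + t ^ 2 := by
  simp [Nnorm]

theorem Nnorm_scale (hθ : ∀ x : K, θ (θ x) = x ^ 3) (r s t : K) :
    Nnorm θ r (θ r * r * s) (θ r * r ^ 2 * t) = (θ r * r ^ 2) ^ 2 * Nnorm θ 1 s t := by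
  simp only [Nnorm, map_mul, map_pow, map_one, hθ]
  ring

theorem Nnorm_one_sub_one (a b : K) :
    Nnorm θ 1 (a - 1) b = a * θ a - a ^ 2 + b ^ 2 - θ b - 1 := by
  simp only [Nnorm, map_sub, map_one]
  ring

variable [CharP K 3]

theorem eq_zero_and_eq_zero_of_map_mul_add_sq_eq_zero (hθ : ∀ x : K, θ (θ x) = x ^ 3)
    {s t : K} (h : θ s * s + t ^ 2 = 0) : s = 0 ∧ t = 0 := by
  have hθh := congrArg θ h
  simp only [map_add, map_mul, map_pow, map_zero, hθ] at hθh
  have hsq : θ t ^ 2 = (s * t) ^ 2 := by linear_combination hθh - s ^ 2 * h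
  have ht : t ^ 3 = 0 := by
    -- `t³ = θ (θ t) = ±θ s θ t = θ s s t = -t³`
    rcases sq_eq_sq_iff_eq_or_eq_neg.mp hsq with hε | hε <;>
    · have hθε := congrArg θ hε
      simp only [map_mul, map_neg, hθ] at hθε
      grind
  obtain rfl : t = 0 := pow_eq_zero_iff three_ne_zero |>.mp ht
  exact ⟨by simpa using h, rfl⟩

theorem eq_zero_of_map_eq_neg (hθ : ∀ x : K, θ (θ x) = x ^ 3) {a : K} (h : θ a = -a) :
    a = 0 := by
  have hcube : a ^ 3 = a := by rw [← hθ, h, map_neg, h, neg_neg]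
  have hroots : a * (a - 1) * (a + 1) = 0 := by linear_combination hcube
  rcases mul_eq_zero.mp hroots with ha | ha
  · rcases mul_eq_zero.mp ha with ha | ha
    · exact ha
    · grind
  · grind

theorem map_eq_neg_of_factor_eq_zero (hθ : ∀ x : K, θ (θ x) = x ^ 3) {a b : K}
    (hE : a * θ a - a ^ 2 + b ^ 2 - θ b = 1)
    (hF : b ^ 2 + b - a * b + a ^ 2 - a + a * θ a - θ a = 0) :
    θ a = -a := by
  have hEθ := congrArg θ hE
  have hFθ := congrArg θ hF
  simp only [map_add, map_sub, map_mul, map_pow, map_one, map_zero, hθ] at hEθ hFθ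
  have key : (a ^ 3 + θ a) * (a + θ a) ^ 3 = 0 := by
    clear hθ
    grind
  have hsum : (a + θ a) ^ 3 = 0 := by
    rcases mul_eq_zero.mp key with h | h
    · have hθh := congrArg θ h
      simp only [map_add, map_pow, map_zero, hθ] at hθh
      rw [add_pow_char]
      linear_combination hθh
    · exact h
  exact eq_neg_of_add_eq_zero_right (pow_eq_zero_iff three_ne_zero |>.mp hsum)

theorem Nnorm_one_ne_zero (hθ : ∀ x : K, θ (θ x) = x ^ 3) (s t : K) : Nnorm θ 1 s t ≠ 0 := by
  intro h
  obtain ⟨a, rfl⟩ : ∃ a, s = a - 1 := ⟨s + 1, by ring⟩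
  rw [Nnorm_one_sub_one] at h
  have hE : a * θ a - a ^ 2 + t ^ 2 - θ t = 1 := by linear_combination h
  have hEθ := congrArg θ hE
  simp only [map_add, map_sub, map_mul, map_pow, map_one, hθ] at hEθ
  have hθa : θ a = -a := by
    have hFF : (t ^ 2 + t - a * t + a ^ 2 - a + a * θ a - θ a)
        * (t ^ 2 + t + a * t + a ^ 2 + a + a * θ a + θ a) = 0 := by
      clear hθ
      grind
    rcases mul_eq_zero.mp hFF with hF | hF
    · exact map_eq_neg_of_factor_eq_zero hθ hE hF
    · have h' := map_eq_neg_of_factor_eq_zero hθ (a := -a) (b := t)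
        (by rw [map_neg]; linear_combination hE) (by rw [map_neg]; linear_combination hF)
      rw [map_neg, neg_neg] at h'
      exact neg_eq_iff_eq_neg.mp h'
  obtain rfl := eq_zero_of_map_eq_neg hθ hθa
  simp only [map_zero] at hE hEθ
  have ht : (t * (t + 1)) ^ 2 = 0 := by
    clear hθ
    grind
  rcases mul_eq_zero.mp (pow_eq_zero_iff two_ne_zero |>.mp ht) with rfl | ht
  · simp at hE
  · obtain rfl := eq_neg_of_add_eq_zero_left ht
    simp at hE

end TitsEndomorphism

/-- Let `K` be a field of characteristic 3 with a Tits endomorphism `θ`.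
The norm `N` is anisotropic: if `N(r,s,t) = 0` then `r = s = t = 0`. -/
theorem stmt_7 {K : Type*} [Field K] [CharP K 3]
    (θ : K →+* K) (hθ : ∀ x : K, θ (θ x) = x ^ 3)
    (r s t : K) (h : Nnorm θ r s t = 0) :
    r = 0 ∧ s = 0 ∧ t = 0 := by
  by_cases hr : r = 0
  · subst hr
    rw [Nnorm_zero_left] at h
    exact ⟨rfl, eq_zero_and_eq_zero_of_map_mul_add_sq_eq_zero hθ h⟩
  · have hθr : θ r ≠ 0 := (map_ne_zero θ).mpr hr
    obtain ⟨s', rfl⟩ : ∃ s', s = θ r * r * s' := ⟨s / (θ r * r), by field_simp⟩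
    obtain ⟨t', rfl⟩ : ∃ t', t = θ r * r ^ 2 * t' := ⟨t / (θ r * r ^ 2), by field_simp⟩
    rw [Nnorm_scale hθ, mul_eq_zero] at h
    exact absurd (h.resolve_left (by positivity)) (Nnorm_one_ne_zero hθ s' t')
end

section
/- Let K be a field of characteristic 3 with a Tits endomorphism θ. For all r, s, t ∈ K, the norm N of the group T is invariant under inversion in T: N(−r, −s+r^{θ+1}, −t) = N(r,s,t). -/
/-- Let `K` be a field of characteristic 3 with a Tits endomorphism `θ`.
The norm `N` is invariant under inversion in `T`:
`N(−r, −s+r^{θ+1}, −t) = N(r,s,t)`. -/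
theorem stmt_10 {K : Type*} [Field K] [CharP K 3]
    (θ : K →+* K) (hθ : ∀ x : K, θ (θ x) = x ^ 3)
    (r s t : K) :
    Nnorm θ (-r) (-s + θ r * r) (-t) = Nnorm θ r s t := by
  have h3 : (3 : K) = 0 := by exact_mod_cast CharP.cast_eq_zero K 3
  have hθs : θ (-s + θ r * r) = -θ s + r ^ 3 * θ r := by
    rw [map_add, map_neg, map_mul, hθ]
  simp only [Nnorm, map_neg, hθs]
  -- the two sides differ by `3 (r^{θ+3} s − r^{θ+1} θ(s))`
  linear_combination (θ r * r ^ 3 * s - θ r * r * θ s) * h3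
end

section
/- Let K be a field of characteristic 3 with a Tits endomorphism θ, and let T = K × K × K be the group with multiplication (r,s,t)·(w,u,v) = (r+w, s+u+θ(r)w, t+v−ru+sw−r^{θ+1}w). For every nonzero z ∈ K, the map (r,s,t) ↦ (zr, z^{θ+1}s, z^{θ+2}t) is an automorphism of the group T. Conversely, if z, z₁, z₂ ∈ K are nonzero and the map (r,s,t) ↦ (zr, z₁s, z₂t) is a group homomorphism of T, then z₁ = z^{θ+1} and z₂ = z^{θ+2}. -/
section Tscale

variable {K : Type*} [Field K]

def Tscale (z z₁ z₂ : K) (a : K × K × K) : K × K × K :=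
  (z * a.1, z₁ * a.2.1, z₂ * a.2.2)

theorem Tscale_bijective {z z₁ z₂ : K} (hz : z ≠ 0) (hz₁ : z₁ ≠ 0) (hz₂ : z₂ ≠ 0) :
    Function.Bijective (Tscale z z₁ z₂) :=
  (mulLeft_bijective₀ z hz).prodMap
    ((mulLeft_bijective₀ z₁ hz₁).prodMap (mulLeft_bijective₀ z₂ hz₂))

theorem Tmul_Tscale (θ : K →+* K) (z : K) (a b : K × K × K) :
    Tmul θ (Tscale z (θ z * z) (θ z * z ^ 2) a) (Tscale z (θ z * z) (θ z * z ^ 2) b) =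
      Tscale z (θ z * z) (θ z * z ^ 2) (Tmul θ a b) := by
  simp only [Tmul, Tscale, Prod.ext_iff, map_mul]
  exact ⟨by ring, by ring, by ring⟩

theorem Tscale_eq_of_Tmul_Tscale {θ : K →+* K} {z z₁ z₂ : K}
    (h : ∀ a b, Tmul θ (Tscale z z₁ z₂ a) (Tscale z z₁ z₂ b) = Tscale z z₁ z₂ (Tmul θ a b)) :
    z₁ = θ z * z ∧ z₂ = θ z * z ^ 2 := by
  -- `(1,0,0)²` has middle coordinate `θ(1)·1 = 1`; `(0,1,0)·(1,0,0)` has last coordinate `1`.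
  have h₁ : θ z * z = z₁ := by simpa [Tmul, Tscale] using congrArg (·.2.1) (h (1, 0, 0) (1, 0, 0))
  have h₂ : z₁ * z = z₂ := by simpa [Tmul, Tscale] using congrArg (·.2.2) (h (0, 1, 0) (1, 0, 0))
  exact ⟨h₁.symm, by rw [← h₂, ← h₁]; ring⟩

end Tscale

theorem stmt_13_general {K : Type*} [Field K]
    (θ : K →+* K) :
    (∀ z : K, z ≠ 0 →
      Function.Bijective
        (fun a : K × K × K =>
          ((z * a.1, θ z * z * a.2.1, θ z * z ^ 2 * a.2.2) : K × K × K)) ∧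
      ∀ a b : K × K × K,
        Tmul θ (z * a.1, θ z * z * a.2.1, θ z * z ^ 2 * a.2.2)
               (z * b.1, θ z * z * b.2.1, θ z * z ^ 2 * b.2.2)
          = (z * (Tmul θ a b).1, θ z * z * (Tmul θ a b).2.1,
              θ z * z ^ 2 * (Tmul θ a b).2.2)) ∧
    (∀ z z₁ z₂ : K, z ≠ 0 → z₁ ≠ 0 → z₂ ≠ 0 →
      (∀ a b : K × K × K,
        Tmul θ (z * a.1, z₁ * a.2.1, z₂ * a.2.2) (z * b.1, z₁ * b.2.1, z₂ * b.2.2)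
          = (z * (Tmul θ a b).1, z₁ * (Tmul θ a b).2.1, z₂ * (Tmul θ a b).2.2)) →
      z₁ = θ z * z ∧ z₂ = θ z * z ^ 2) := by
  refine ⟨fun z hz => ⟨?_, Tmul_Tscale θ z⟩,
    fun z z₁ z₂ _ _ _ h => Tscale_eq_of_Tmul_Tscale h⟩
  have hθz : θ z ≠ 0 := (map_ne_zero θ).mpr hz
  exact Tscale_bijective hz (mul_ne_zero hθz hz) (mul_ne_zero hθz (pow_ne_zero 2 hz))

/-- Let `K` be a field of characteristic 3 with a Tits endomorphism `θ`.
For every nonzero `z ∈ K`, the map `(r,s,t) ↦ (zr, z^{θ+1}s, z^{θ+2}t)` is an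
automorphism of the group `T`. Conversely, if `z, z₁, z₂` are nonzero and
`(r,s,t) ↦ (zr, z₁s, z₂t)` is a group homomorphism of `T`, then `z₁ = z^{θ+1}`
and `z₂ = z^{θ+2}`. -/
theorem stmt_13 {K : Type*} [Field K] [CharP K 3]
    (θ : K →+* K) (hθ : ∀ x : K, θ (θ x) = x ^ 3) :
    (∀ z : K, z ≠ 0 →
      Function.Bijective
        (fun a : K × K × K =>
          ((z * a.1, θ z * z * a.2.1, θ z * z ^ 2 * a.2.2) : K × K × K)) ∧
      ∀ a b : K × K × K,
        Tmul θ (z * a.1, θ z * z * a.2.1, θ z * z ^ 2 * a.2.2)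
               (z * b.1, θ z * z * b.2.1, θ z * z ^ 2 * b.2.2)
          = (z * (Tmul θ a b).1, θ z * z * (Tmul θ a b).2.1,
              θ z * z ^ 2 * (Tmul θ a b).2.2)) ∧
    (∀ z z₁ z₂ : K, z ≠ 0 → z₁ ≠ 0 → z₂ ≠ 0 →
      (∀ a b : K × K × K,
        Tmul θ (z * a.1, z₁ * a.2.1, z₂ * a.2.2) (z * b.1, z₁ * b.2.1, z₂ * b.2.2)
          = (z * (Tmul θ a b).1, z₁ * (Tmul θ a b).2.1, z₂ * (Tmul θ a b).2.2)) →
      z₁ = θ z * z ∧ z₂ = θ z * z ^ 2) :=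
  stmt_13_general θ
end
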